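/- arXiv:2405.11563 — 2 statements merged into one kernel-verified Lean document; each statement's English description precedes it below -/
import Mathlib

section
/- Water-filling optimality: let c₁,…,c_n > 0 and B ≥ 0. The vector b* with bᵢ* = max(0, log₂ cᵢ − λ), where λ ∈ ℝ is chosen so that Σᵢ bᵢ* = B, minimizes Σᵢ cᵢ·2^{-bᵢ} over all b ∈ ℝⁿ with bᵢ ≥ 0 and Σᵢ bᵢ = B. -/
lemma wf_key (c lam x : ℝ) (hc : 0 < c) (hx : 0 ≤ x) :
    c * (2:ℝ) ^ (-(max 0 (Real.logb 2 c - lam))) -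
      Real.log 2 * (2:ℝ) ^ lam * (x - max 0 (Real.logb 2 c - lam)) ≤ c * (2:ℝ) ^ (-x) := by
  have h2 : (0:ℝ) < 2 := two_pos
  have hlog2 : 0 < Real.log 2 := Real.log_pos one_lt_two
  have hp : 0 < (2:ℝ) ^ lam := Real.rpow_pos_of_pos h2 lam
  rcases le_or_gt (Real.logb 2 c) lam with h | h
  · have ha : max 0 (Real.logb 2 c - lam) = 0 := max_eq_left (by linarith)
    rw [ha]
    have hcle : c ≤ (2:ℝ) ^ lam := by
      calc c = (2:ℝ) ^ (Real.logb 2 c) := (Real.rpow_logb h2 (by norm_num) hc).symm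
        _ ≤ (2:ℝ) ^ lam := by
            apply Real.rpow_le_rpow_left_iff (x := (2:ℝ)) one_lt_two |>.mpr h
    have h1 : (1:ℝ) - Real.log 2 * x ≤ (2:ℝ) ^ (-x) := by
      have := Real.add_one_le_exp (Real.log 2 * (-x))
      rw [Real.rpow_def_of_pos h2]
      linarith
    have h2x : (2:ℝ) ^ (-x) ≤ 1 :=
      Real.rpow_le_one_of_one_le_of_nonpos (by norm_num) (by linarith)
    rw [neg_zero, Real.rpow_zero, sub_zero, mul_one]
    have e1 := mul_le_mul_of_nonneg_right hcle (by linarith : (0:ℝ) ≤ 1 - (2:ℝ) ^ (-x))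
    have e2 := mul_le_mul_of_nonneg_left
      (show (1:ℝ) - (2:ℝ) ^ (-x) ≤ Real.log 2 * x by linarith) hp.le
    nlinarith
  · have ha : max 0 (Real.logb 2 c - lam) = Real.logb 2 c - lam := max_eq_right (by linarith)
    rw [ha]
    set a := Real.logb 2 c - lam with hadef
    have hceq : c = (2:ℝ) ^ (lam + a) := by
      have : lam + a = Real.logb 2 c := by rw [hadef]; ring
      rw [this, Real.rpow_logb h2 (by norm_num) hc]
    have e1 : c * (2:ℝ) ^ (-a) = (2:ℝ) ^ lam := by
      rw [hceq, ← Real.rpow_add h2]; ring_nf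
    have e2 : c * (2:ℝ) ^ (-x) = (2:ℝ) ^ lam * (2:ℝ) ^ (a - x) := by
      rw [hceq, ← Real.rpow_add h2, ← Real.rpow_add h2]; ring_nf
    rw [e1, e2]
    have h1 : (1:ℝ) + Real.log 2 * (a - x) ≤ (2:ℝ) ^ (a - x) := by
      have := Real.add_one_le_exp (Real.log 2 * (a - x))
      rw [Real.rpow_def_of_pos h2]
      linarith
    nlinarith

/-- Water-filling optimality: with `cᵢ > 0`, `B ≥ 0`, and `λ` chosen so that the
water-filling allocation `bᵢ* = max(0, log₂ cᵢ − λ)` satisfies `∑ᵢ bᵢ* = B`, the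
vector `b*` minimizes `∑ᵢ cᵢ·2^(-bᵢ)` over all `b` with `bᵢ ≥ 0` and `∑ᵢ bᵢ = B`. -/
theorem stmt_7 {n : ℕ} (c : Fin n → ℝ) (hc : ∀ i, 0 < c i) (B : ℝ) (hB : 0 ≤ B)
    (lam : ℝ) (hlam : ∑ i, max 0 (Real.logb 2 (c i) - lam) = B) :
    ∀ b : Fin n → ℝ, (∀ i, 0 ≤ b i) → ∑ i, b i = B →
      ∑ i, c i * (2 : ℝ) ^ (-(max 0 (Real.logb 2 (c i) - lam))) ≤
        ∑ i, c i * (2 : ℝ) ^ (-(b i)) := by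
  intro b hb0 hb
  have h1 := Finset.sum_le_sum (fun i (_ : i ∈ Finset.univ) =>
    wf_key (c i) lam (b i) (hc i) (hb0 i))
  have hsum : ∑ i, (b i - max 0 (Real.logb 2 (c i) - lam)) = 0 := by
    rw [Finset.sum_sub_distrib, hb, hlam]; ring
  rw [Finset.sum_sub_distrib, ← Finset.mul_sum, hsum, mul_zero, sub_zero] at h1
  exact h1
end

section
/- Strict decrease of the optimal value in the water-filling problem: let V(B) = min{Σᵢ cᵢ·2^{-bᵢ} : bᵢ ≥ 0, Σᵢ bᵢ = B} with all cᵢ > 0. Then V is strictly decreasing and convex in B ≥ 0. -/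
open Real

/-- Strict decrease and convexity of the optimal value of the water-filling problem:
`V(B) = inf {∑ᵢ cᵢ·2^(-bᵢ) : bᵢ ≥ 0, ∑ᵢ bᵢ = B}` is strictly decreasing and convex
on `[0, ∞)`. -/
theorem stmt_19 {n : ℕ} (hn : 1 ≤ n) (c : Fin n → ℝ) (hc : ∀ i, 0 < c i) :
    StrictAntiOn
      (fun B : ℝ => sInf ((fun b : Fin n → ℝ => ∑ i, c i * (2 : ℝ) ^ (-(b i))) ''
        {b | (∀ i, 0 ≤ b i) ∧ ∑ i, b i = B})) (Set.Ici 0) ∧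
    ConvexOn ℝ (Set.Ici 0)
      (fun B : ℝ => sInf ((fun b : Fin n → ℝ => ∑ i, c i * (2 : ℝ) ^ (-(b i))) ''
        {b | (∀ i, 0 ≤ b i) ∧ ∑ i, b i = B})) := by
  have hn' : 0 < n := hn
  set i0 : Fin n := ⟨0, hn'⟩ with hi0
  set f : (Fin n → ℝ) → ℝ := fun b => ∑ i, c i * (2:ℝ) ^ (-(b i)) with hfdef
  set S : ℝ → Set ℝ := fun B => f '' {b | (∀ i, 0 ≤ b i) ∧ ∑ i, b i = B} with hSdef
  have hbdd : ∀ B, BddBelow (S B) := by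
    intro B
    refine ⟨0, ?_⟩
    rintro x ⟨b, _, rfl⟩
    exact Finset.sum_nonneg fun i _ =>
      le_of_lt (mul_pos (hc i) (rpow_pos_of_pos two_pos _))
  have hne : ∀ B : ℝ, 0 ≤ B → (S B).Nonempty := by
    intro B hB
    refine ⟨f (fun i => if i = i0 then B else 0),
      (fun i => if i = i0 then B else 0), ⟨?_, ?_⟩, rfl⟩
    · intro i; dsimp only; split <;> simp [hB]
    · simp
  have hV_le : ∀ (B : ℝ) (b : Fin n → ℝ), (∀ i, 0 ≤ b i) → (∑ i, b i = B) →
      sInf (S B) ≤ f b := fun B b h1 h2 => csInf_le (hbdd B) ⟨b, ⟨h1, h2⟩, rfl⟩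
  have hconv2 : ∀ (a b u v : ℝ), 0 ≤ a → 0 ≤ b → a + b = 1 →
      (2:ℝ) ^ (-(a*u + b*v)) ≤ a * (2:ℝ)^(-u) + b * (2:ℝ)^(-v) := by
    intro a b u v ha hb hab
    have h2 : ∀ x : ℝ, (2:ℝ) ^ x = Real.exp (Real.log 2 * x) := fun x =>
      Real.rpow_def_of_pos two_pos x
    rw [h2, h2, h2]
    have h := convexOn_exp.2 (Set.mem_univ (Real.log 2 * -u))
      (Set.mem_univ (Real.log 2 * -v)) ha hb hab
    simp only [smul_eq_mul] at h
    have harg : a * (Real.log 2 * -u) + b * (Real.log 2 * -v)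
        = Real.log 2 * -(a*u + b*v) := by ring
    rwa [harg] at h
  constructor
  · -- strict antitone
    show StrictAntiOn (fun B => sInf (S B)) (Set.Ici 0)
    intro B hB B' _ hlt
    simp only
    set δ := B' - B with hδdef
    have hδ : 0 < δ := sub_pos.2 hlt
    set γ := c i0 * (2:ℝ)^(-B) * (1 - (2:ℝ)^(-δ)) with hγdef
    have hγ : 0 < γ := by
      apply mul_pos (mul_pos (hc i0) (rpow_pos_of_pos two_pos _))
      have h1 : (2:ℝ)^(-δ) < (2:ℝ)^(0:ℝ) :=
        Real.rpow_lt_rpow_left_iff one_lt_two |>.2 (by linarith)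
      rw [Real.rpow_zero] at h1
      linarith
    have key : ∀ x ∈ S B, sInf (S B') + γ ≤ x := by
      rintro x ⟨b, ⟨hbnn, hbsum⟩, rfl⟩
      set b' : Fin n → ℝ := fun i => b i + if i = i0 then δ else 0 with hb'def
      have hb'nn : ∀ i, 0 ≤ b' i := by
        intro i
        have : (0:ℝ) ≤ if i = i0 then δ else 0 := by split <;> simp [hδ.le]
        exact add_nonneg (hbnn i) this
      have hb'sum : ∑ i, b' i = B' := by
        simp only [hb'def, Finset.sum_add_distrib, hbsum, Finset.sum_ite_eq',
          Finset.mem_univ, if_true]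
        linarith
      have hbi0 : b i0 ≤ B := by
        rw [← hbsum]
        exact Finset.single_le_sum (fun i _ => hbnn i) (Finset.mem_univ i0)
      have hdiff : f b - f b' = c i0 * ((2:ℝ)^(-(b i0)) - (2:ℝ)^(-(b i0 + δ))) := by
        rw [hfdef]
        simp only [hb'def]
        rw [← Finset.sum_sub_distrib]
        rw [Finset.sum_eq_single i0]
        · simp; ring
        · intro j _ hj
          simp [hj]
        · intro h; exact absurd (Finset.mem_univ i0) h
      have hsplit : (2:ℝ)^(-(b i0 + δ)) = (2:ℝ)^(-(b i0)) * (2:ℝ)^(-δ) := by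
        rw [← Real.rpow_add two_pos]; ring_nf
      have hmono : (2:ℝ)^(-B) ≤ (2:ℝ)^(-(b i0)) :=
        Real.rpow_le_rpow_left_iff one_lt_two |>.2 (by linarith)
      have hgap : γ ≤ f b - f b' := by
        rw [hdiff, hsplit, hγdef]
        have h1 : (2:ℝ)^(-δ) ≤ 1 := by
          have := Real.rpow_le_rpow_left_iff (x := (2:ℝ)) one_lt_two |>.2
            (show -δ ≤ 0 by linarith)
          simpa using this
        have hc0 := (hc i0).le
        have heq : c i0 * ((2:ℝ)^(-(b i0)) - (2:ℝ)^(-(b i0)) * (2:ℝ)^(-δ))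
            = c i0 * (2:ℝ)^(-(b i0)) * (1 - (2:ℝ)^(-δ)) := by ring
        rw [heq]
        exact mul_le_mul_of_nonneg_right
          (mul_le_mul_of_nonneg_left hmono hc0) (by linarith)
      have hVle : sInf (S B') ≤ f b' := hV_le B' b' hb'nn hb'sum
      linarith
    have := le_csInf (hne B hB) key
    linarith
  · -- convexity
    show ConvexOn ℝ (Set.Ici 0) (fun B => sInf (S B))
    refine ⟨convex_Ici 0, ?_⟩
    intro x hx y hy a b ha hb hab
    simp only [smul_eq_mul]
    refine le_of_forall_pos_le_add ?_
    intro ε hε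
    obtain ⟨u, ⟨bx, ⟨hbxnn, hbxsum⟩, rfl⟩, hux⟩ :=
      exists_lt_of_csInf_lt (hne x hx) (lt_add_of_pos_right (sInf (S x)) hε)
    obtain ⟨v, ⟨by', ⟨hbynn, hbysum⟩, rfl⟩, hvy⟩ :=
      exists_lt_of_csInf_lt (hne y hy) (lt_add_of_pos_right (sInf (S y)) hε)
    set z : Fin n → ℝ := fun i => a * bx i + b * by' i with hzdef
    have hznn : ∀ i, 0 ≤ z i := fun i =>
      add_nonneg (mul_nonneg ha (hbxnn i)) (mul_nonneg hb (hbynn i))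
    have hzsum : ∑ i, z i = a * x + b * y := by
      simp only [hzdef, Finset.sum_add_distrib, ← Finset.mul_sum, hbxsum, hbysum]
    have hfz : f z ≤ a * f bx + b * f by' := by
      rw [hfdef]
      simp only [Finset.mul_sum, ← Finset.sum_add_distrib]
      refine Finset.sum_le_sum fun i _ => ?_
      have := hconv2 a b (bx i) (by' i) ha hb hab
      calc c i * (2:ℝ) ^ (-(z i)) = c i * (2:ℝ) ^ (-(a * bx i + b * by' i)) := rfl
        _ ≤ c i * (a * (2:ℝ)^(-(bx i)) + b * (2:ℝ)^(-(by' i))) :=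
            mul_le_mul_of_nonneg_left this (hc i).le
        _ = a * (c i * (2:ℝ)^(-(bx i))) + b * (c i * (2:ℝ)^(-(by' i))) := by ring
    have hVle : sInf (S (a*x + b*y)) ≤ f z := hV_le _ z hznn hzsum
    have : a * f bx + b * f by' ≤ a * sInf (S x) + b * sInf (S y) + ε := by
      nlinarith
    linarith
end
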